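/- arXiv:1110.4253 — 2 statements merged into one kernel-verified Lean document; each statement's English description precedes it below -/
import Mathlib

section
/- Let N ≥ 1 be an integer, let (ψ_n)_{n=1}^N be a finite orthonormal system in L₂(X, dμ; H), and let (b_n)_{n=1}^N be scalars. Define S*_N(x) := max_{1 ≤ j ≤ N} ‖Σ_{n=1}^j b_n ψ_n(x)‖_H for x ∈ X. Then (∫_X S*_N(x)² dμ(x))^{1/2} ≤ (2 + log₂ N) (Σ_{n=1}^N |b_n|²)^{1/2}. -/
/-!
Writing `j ≤ 2 ^ m` in binary cuts the partial sum over `(0, j]` into at most one dyadic block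
`(2 ^ l k, 2 ^ l (k + 1)]` per scale `l ≤ m`. By Cauchy–Schwarz, the square of the partial sum is
then at most `m + 1` times the sum of the squared block sums over *all* dyadic blocks, a bound that
no longer depends on `j`. At each scale the blocks partition `(0, 2 ^ m]`, so by orthonormality the
integrated squared block sums add up to `∑ |b_n|²`, and the integral of the squared maximal
function is at most `(m + 1)² ∑ |b_n|²`. Finally `m = ⌈log₂ N⌉ < log₂ N + 1`.
-/

open MeasureTheory Finset
open scoped ENNReal ComplexConjugate

def dyadicBlock (l k : ℕ) : Finset ℕ := Ioc (2 ^ l * k) (2 ^ l * (k + 1))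

theorem sum_range_sum_Ioc_of_monotone {M : Type*} [AddCommMonoid M] (g : ℕ → M)
    {a : ℕ → ℕ} (ha : Monotone a) (K : ℕ) :
    ∑ k ∈ range K, ∑ n ∈ Ioc (a k) (a (k + 1)), g n = ∑ n ∈ Ioc (a 0) (a K), g n := by
  induction K with
  | zero => simp
  | succ K ih =>
    rw [sum_range_succ, ih, sum_Ioc_consecutive _ (ha K.zero_le) (ha K.le_succ)]

theorem sum_range_sum_Ioc_of_antitone {M : Type*} [AddCommMonoid M] (g : ℕ → M)
    {a : ℕ → ℕ} (ha : Antitone a) (K : ℕ) :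
    ∑ k ∈ range K, ∑ n ∈ Ioc (a (k + 1)) (a k), g n = ∑ n ∈ Ioc (a K) (a 0), g n := by
  induction K with
  | zero => simp
  | succ K ih =>
    rw [sum_range_succ, ih, add_comm, sum_Ioc_consecutive _ (ha K.le_succ) (ha K.zero_le)]

theorem sum_range_sum_dyadicBlock {M : Type*} [AddCommMonoid M] (g : ℕ → M) (l K : ℕ) :
    ∑ k ∈ range K, ∑ n ∈ dyadicBlock l k, g n = ∑ n ∈ Ioc 0 (2 ^ l * K), g n := by
  simpa [dyadicBlock] using sum_range_sum_Ioc_of_monotone g (a := (2 ^ l * ·))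
    (monotone_mul_left_of_nonneg (by positivity)) K

theorem two_pow_mul_div_two_pow_eq (j l : ℕ) :
    2 ^ l * (j / 2 ^ l) = 2 ^ (l + 1) * (j / 2 ^ (l + 1)) + 2 ^ l * (j / 2 ^ l % 2) := by
  rw [pow_succ, ← Nat.div_div_eq_div_mul, mul_assoc, ← mul_add, Nat.div_add_mod]

theorem Ioc_two_pow_mul_div_eq_empty_or_dyadicBlock {j m : ℕ} (hj : j ≤ 2 ^ m) (l : ℕ) :
    Ioc (2 ^ (l + 1) * (j / 2 ^ (l + 1))) (2 ^ l * (j / 2 ^ l)) = ∅ ∨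
      ∃ k < 2 ^ (m - l), Ioc (2 ^ (l + 1) * (j / 2 ^ (l + 1))) (2 ^ l * (j / 2 ^ l)) =
        dyadicBlock l k := by
  set k := 2 * (j / 2 ^ (l + 1))
  have hfloor := two_pow_mul_div_two_pow_eq j l
  rw [show 2 ^ (l + 1) * (j / 2 ^ (l + 1)) = 2 ^ l * k by ring] at hfloor ⊢
  rcases Nat.mod_two_eq_zero_or_one (j / 2 ^ l) with hbit | hbit
  · left
    rw [hfloor, hbit, mul_zero, add_zero, Ioc_self]
  · right
    rw [hbit, mul_one, ← mul_add_one] at hfloor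
    have hle : 2 ^ l * (k + 1) ≤ 2 ^ m := hfloor ▸ (Nat.mul_div_le j _).trans hj
    have hlm : l ≤ m := (Nat.pow_le_pow_iff_right one_lt_two).1 <|
      (Nat.le_mul_of_pos_right _ k.succ_pos).trans hle
    rw [← Nat.add_sub_cancel' hlm, pow_add] at hle
    exact ⟨k, Nat.le_of_mul_le_mul_left hle (by positivity), by rw [hfloor, dyadicBlock]⟩

theorem nnnorm_sum_Ioc_sq_le_sum_dyadicBlock {E : Type*} [SeminormedAddCommGroup E]
    (f : ℕ → E) {j m : ℕ} (hj : j ≤ 2 ^ m) :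
    ‖∑ n ∈ Ioc 0 j, f n‖₊ ^ 2 ≤ (m + 1) * ∑ l ∈ range (m + 1),
      ∑ k ∈ range (2 ^ (m - l)), ‖∑ n ∈ dyadicBlock l k, f n‖₊ ^ 2 := by
  set e : ℕ → ℕ := fun l => 2 ^ l * (j / 2 ^ l)
  have he : Antitone e := antitone_nat_of_succ_le fun l => by
    simp only [e, two_pow_mul_div_two_pow_eq j l, le_add_iff_nonneg_right, zero_le]
  have hsplit :
      ∑ n ∈ Ioc 0 j, f n = ∑ l ∈ range (m + 1), ∑ n ∈ Ioc (e (l + 1)) (e l), f n := by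
    rw [sum_range_sum_Ioc_of_antitone f he]
    simp [e, Nat.div_eq_of_lt (hj.trans_lt (Nat.pow_lt_pow_succ one_lt_two))]
  have hpiece : ∀ l ∈ range (m + 1), ‖∑ n ∈ Ioc (e (l + 1)) (e l), f n‖₊ ^ 2 ≤
      ∑ k ∈ range (2 ^ (m - l)), ‖∑ n ∈ dyadicBlock l k, f n‖₊ ^ 2 := fun l _ => by
    rcases Ioc_two_pow_mul_div_eq_empty_or_dyadicBlock hj l with hempty | ⟨k, hk, hblock⟩
    · simp [e, hempty]
    · rw [show Ioc (e (l + 1)) (e l) = dyadicBlock l k from hblock]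
      exact single_le_sum (f := fun k => ‖∑ n ∈ dyadicBlock l k, f n‖₊ ^ 2)
        (fun _ _ => zero_le) (mem_range.2 hk)
  calc ‖∑ n ∈ Ioc 0 j, f n‖₊ ^ 2
      ≤ (∑ l ∈ range (m + 1), ‖∑ n ∈ Ioc (e (l + 1)) (e l), f n‖₊) ^ 2 := by
        rw [hsplit]; gcongr; exact nnnorm_sum_le _ _
    _ ≤ #(range (m + 1)) * ∑ l ∈ range (m + 1), ‖∑ n ∈ Ioc (e (l + 1)) (e l), f n‖₊ ^ 2 :=
        sq_sum_le_card_mul_sum_sq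
    _ ≤ _ := by rw [card_range, Nat.cast_add_one]; gcongr with l hl; exact hpiece l hl

section Orthonormal

variable {X : Type*} [MeasurableSpace X] {μ : Measure X} {𝕜 : Type*} [RCLike 𝕜]
  {H : Type*} [NormedAddCommGroup H] [InnerProductSpace 𝕜 H]

theorem MeasureTheory.MemLp.integrable_inner {f g : X → H} (hf : MemLp f 2 μ)
    (hg : MemLp g 2 μ) : Integrable (fun x => inner 𝕜 (f x) (g x)) μ :=
  (L2.integrable_inner (hf.toLp f) (hg.toLp g)).congr <| by
    filter_upwards [hf.coeFn_toLp, hg.coeFn_toLp] with x hfx hgx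
    rw [hfx, hgx]

variable {ι : Type*} [DecidableEq ι] {s : Finset ι} {ψ : ι → X → H}

theorem integral_norm_sum_smul_sq_of_orthonormal (hmem : ∀ n ∈ s, MemLp (ψ n) 2 μ)
    (horth : ∀ n ∈ s, ∀ m ∈ s,
      ∫ x, (inner 𝕜 (ψ n x) (ψ m x) : 𝕜) ∂μ = if n = m then (1 : 𝕜) else 0) (b : ι → 𝕜) :
    ∫ x, ‖∑ n ∈ s, b n • ψ n x‖ ^ 2 ∂μ = ∑ n ∈ s, ‖b n‖ ^ 2 := by
  have hint : ∀ n ∈ s, ∀ m ∈ s,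
      Integrable (fun x => conj (b n) * b m * inner 𝕜 (ψ n x) (ψ m x)) μ :=
    fun n hn m hm => ((hmem n hn).integrable_inner (hmem m hm)).const_mul _
  have hexpand : ∀ x, ((‖∑ n ∈ s, b n • ψ n x‖ ^ 2 : ℝ) : 𝕜) =
      ∑ n ∈ s, ∑ m ∈ s, conj (b n) * b m * inner 𝕜 (ψ n x) (ψ m x) := fun x => by
    rw [RCLike.ofReal_pow, ← inner_self_eq_norm_sq_to_K]
    simp_rw [sum_inner, inner_sum, inner_smul_left, inner_smul_right, mul_assoc]
  apply RCLike.ofReal_injective (K := 𝕜)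
  calc ((∫ x, ‖∑ n ∈ s, b n • ψ n x‖ ^ 2 ∂μ : ℝ) : 𝕜)
      = ∑ n ∈ s, ∑ m ∈ s, conj (b n) * b m * ∫ x, inner 𝕜 (ψ n x) (ψ m x) ∂μ := by
        rw [← integral_ofReal]
        simp_rw [hexpand]
        rw [integral_finsetSum _ fun n hn => integrable_finsetSum _ (hint n hn)]
        refine sum_congr rfl fun n hn => ?_
        rw [integral_finsetSum _ (hint n hn)]
        simp_rw [integral_const_mul]
    _ = ∑ n ∈ s, conj (b n) * b n := by
        refine sum_congr rfl fun n hn => ?_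
        rw [sum_congr rfl fun m hm => by rw [horth n hn m hm]]
        simp [hn]
    _ = _ := by push_cast; simp [RCLike.conj_mul]

theorem lintegral_enorm_sum_smul_sq_of_orthonormal (hmem : ∀ n ∈ s, MemLp (ψ n) 2 μ)
    (horth : ∀ n ∈ s, ∀ m ∈ s,
      ∫ x, (inner 𝕜 (ψ n x) (ψ m x) : 𝕜) ∂μ = if n = m then (1 : 𝕜) else 0) (b : ι → 𝕜) :
    ∫⁻ x, ‖∑ n ∈ s, b n • ψ n x‖ₑ ^ 2 ∂μ = ∑ n ∈ s, ‖b n‖ₑ ^ 2 := by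
  have hsum : MemLp (fun x => ∑ n ∈ s, b n • ψ n x) 2 μ :=
    memLp_finsetSum s fun n hn => (hmem n hn).const_smul (b n)
  have := ofReal_integral_eq_lintegral_ofReal (hsum.integrable_norm_pow two_ne_zero)
    (ae_of_all _ fun x => by positivity)
  rw [integral_norm_sum_smul_sq_of_orthonormal hmem horth] at this
  simpa [ENNReal.ofReal_sum_of_nonneg, ENNReal.ofReal_pow, ofReal_norm] using this.symm

end Orthonormal

theorem lintegral_iSup_enorm_partialSum_sq_le {X : Type*} [MeasurableSpace X] {μ : Measure X}
    {𝕜 : Type*} [RCLike 𝕜] {H : Type*} [NormedAddCommGroup H] [InnerProductSpace 𝕜 H]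
    {N m : ℕ} (hNm : N ≤ 2 ^ m) (ψ : ℕ → X → H) (b : ℕ → 𝕜)
    (hmem : ∀ n ∈ Icc 1 N, MemLp (ψ n) 2 μ)
    (horth : ∀ n ∈ Icc 1 N, ∀ n' ∈ Icc 1 N,
      ∫ x, (inner 𝕜 (ψ n x) (ψ n' x) : 𝕜) ∂μ = if n = n' then (1 : 𝕜) else 0) :
    ∫⁻ x, (⨆ j ∈ Icc 1 N, ‖∑ n ∈ Icc 1 j, b n • ψ n x‖ₑ) ^ 2 ∂μ ≤
      (m + 1) ^ 2 * ∑ n ∈ Icc 1 N, ‖b n‖ₑ ^ 2 := by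
  set T : ℕ → ℕ → X → H := fun l k x => ∑ n ∈ dyadicBlock l k ∩ Icc 1 N, b n • ψ n x
  have hmem' : ∀ l k, ∀ n ∈ dyadicBlock l k ∩ Icc 1 N, MemLp (ψ n) 2 μ :=
    fun l k n hn => hmem n (mem_inter.1 hn).2
  have horth' : ∀ l k, ∀ n ∈ dyadicBlock l k ∩ Icc 1 N, ∀ n' ∈ dyadicBlock l k ∩ Icc 1 N,
      ∫ x, (inner 𝕜 (ψ n x) (ψ n' x) : 𝕜) ∂μ = if n = n' then (1 : 𝕜) else 0 :=
    fun l k n hn n' hn' => horth n (mem_inter.1 hn).2 n' (mem_inter.1 hn').2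
  have hpt : ∀ x, (⨆ j ∈ Icc 1 N, ‖∑ n ∈ Icc 1 j, b n • ψ n x‖ₑ) ^ 2 ≤
      (m + 1) * ∑ l ∈ range (m + 1), ∑ k ∈ range (2 ^ (m - l)), ‖T l k x‖ₑ ^ 2 := fun x => by
    simp_rw [ENNReal.iSup_pow_of_ne_zero two_ne_zero]
    refine iSup₂_le fun j hj => ?_
    have := nnnorm_sum_Ioc_sq_le_sum_dyadicBlock
      (fun n => if n ∈ Icc 1 N then b n • ψ n x else 0) ((mem_Icc.1 hj).2.trans hNm)
    simp_rw [sum_ite_mem] at this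
    rw [show Ioc 0 j ∩ Icc 1 N = Icc 1 j by ext; simp at hj ⊢; omega] at this
    simp only [enorm_eq_nnnorm]
    exact_mod_cast this
  have hlevel : ∀ l ∈ range (m + 1),
      ∑ k ∈ range (2 ^ (m - l)), ∑ n ∈ dyadicBlock l k ∩ Icc 1 N, ‖b n‖ₑ ^ 2 =
        ∑ n ∈ Icc 1 N, ‖b n‖ₑ ^ 2 := fun l hl => by
    simp_rw [← sum_ite_mem]
    rw [sum_range_sum_dyadicBlock, ← pow_add,
      Nat.add_sub_cancel' (Nat.lt_succ_iff.1 (mem_range.1 hl)), sum_ite_mem, inter_eq_right.2]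
    intro n; simp; omega
  have hmeas : ∀ l k, AEMeasurable (fun x => ‖T l k x‖ₑ ^ 2) μ := fun l k =>
    (memLp_finsetSum _ fun n hn => (hmem' l k n hn).const_smul (b n)).aestronglyMeasurable
      |>.enorm.pow_const 2
  calc ∫⁻ x, (⨆ j ∈ Icc 1 N, ‖∑ n ∈ Icc 1 j, b n • ψ n x‖ₑ) ^ 2 ∂μ
      ≤ ∫⁻ x, (m + 1) * ∑ l ∈ range (m + 1), ∑ k ∈ range (2 ^ (m - l)), ‖T l k x‖ₑ ^ 2 ∂μ :=
        lintegral_mono hpt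
    _ = (m + 1) * ∑ l ∈ range (m + 1), ∑ k ∈ range (2 ^ (m - l)),
          ∫⁻ x, ‖T l k x‖ₑ ^ 2 ∂μ := by
        rw [lintegral_const_mul' _ _ (by simp), lintegral_finsetSum' _ fun l _ =>
          Finset.aemeasurable_fun_sum _ fun k _ => hmeas l k]
        simp_rw [lintegral_finsetSum' _ fun k _ => hmeas _ k]
    _ = (m + 1) ^ 2 * ∑ n ∈ Icc 1 N, ‖b n‖ₑ ^ 2 := by
        simp_rw [T, lintegral_enorm_sum_smul_sq_of_orthonormal (hmem' _ _) (horth' _ _)]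
        rw [sum_congr rfl hlevel, sum_const, card_range, nsmul_eq_mul]
        push_cast; ring

theorem Nat.cast_clog_lt_logb_add_one (b n : ℕ) : (Nat.clog b n : ℝ) < Real.logb b n + 1 := by
  rw [← Real.natCeil_logb_natCast]
  exact Nat.ceil_lt_add_one (div_nonneg (Real.log_natCast_nonneg n) (Real.log_natCast_nonneg b))

theorem sum_enorm_sq_rpow_half_eq_ofReal_sqrt {ι 𝕜 : Type*} [RCLike 𝕜] (s : Finset ι)
    (b : ι → 𝕜) :
    (∑ n ∈ s, ‖b n‖ₑ ^ 2) ^ (1 / 2 : ℝ) = ENNReal.ofReal √(∑ n ∈ s, ‖b n‖ ^ 2) := by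
  rw [Real.sqrt_eq_rpow, ← ENNReal.ofReal_rpow_of_nonneg (by positivity) (by norm_num),
    ENNReal.ofReal_sum_of_nonneg fun _ _ => by positivity]
  simp_rw [ENNReal.ofReal_pow (norm_nonneg _), ofReal_norm]

theorem menshov_rademacher_inequality_general
    {X : Type*} [MeasurableSpace X] (μ : Measure X)
    {𝕜 : Type*} [RCLike 𝕜]
    {H : Type*} [NormedAddCommGroup H] [InnerProductSpace 𝕜 H]
    (N : ℕ) (ψ : ℕ → X → H) (b : ℕ → 𝕜)
    (hmem : ∀ n, 1 ≤ n → n ≤ N → MemLp (ψ n) 2 μ)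
    (horth : ∀ n m, 1 ≤ n → n ≤ N → 1 ≤ m → m ≤ N →
      ∫ x, (inner 𝕜 (ψ n x) (ψ m x) : 𝕜) ∂μ = if n = m then (1 : 𝕜) else 0) :
    (∫⁻ x, (⨆ j ∈ Finset.Icc 1 N,
        (‖∑ n ∈ Finset.Icc 1 j, b n • ψ n x‖₊ : ℝ≥0∞)) ^ 2 ∂μ) ^ (1 / 2 : ℝ)
      ≤ ENNReal.ofReal
          ((2 + Real.logb 2 (N : ℝ)) * Real.sqrt (∑ n ∈ Finset.Icc 1 N, ‖b n‖ ^ 2)) := by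
  set m := Nat.clog 2 N
  have hbound := lintegral_iSup_enorm_partialSum_sq_le (μ := μ) (Nat.le_pow_clog one_lt_two N)
    ψ b (fun n hn => hmem n (mem_Icc.1 hn).1 (mem_Icc.1 hn).2)
    (fun n hn n' hn' => horth n n' (mem_Icc.1 hn).1 (mem_Icc.1 hn).2 (mem_Icc.1 hn').1
      (mem_Icc.1 hn').2)
  have hlog : (m : ℝ) + 1 ≤ 2 + Real.logb 2 N := by
    have : (m : ℝ) < Real.logb 2 N + 1 := by exact_mod_cast Nat.cast_clog_lt_logb_add_one 2 N
    linarith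
  have hm : (m + 1 : ℝ≥0∞) ≤ ENNReal.ofReal (2 + Real.logb 2 N) := by
    rw [← ENNReal.ofReal_natCast, ← ENNReal.ofReal_one,
      ← ENNReal.ofReal_add m.cast_nonneg zero_le_one]
    exact ENNReal.ofReal_le_ofReal hlog
  calc _ ≤ ((m + 1) ^ 2 * ∑ n ∈ Icc 1 N, ‖b n‖ₑ ^ 2) ^ (1 / 2 : ℝ) :=
        ENNReal.rpow_le_rpow hbound (by norm_num)
    _ = (m + 1) * ENNReal.ofReal √(∑ n ∈ Icc 1 N, ‖b n‖ ^ 2) := by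
        rw [ENNReal.mul_rpow_of_nonneg _ _ (by norm_num), sum_enorm_sq_rpow_half_eq_ofReal_sqrt,
          one_div, ← Nat.cast_two (R := ℝ), ENNReal.pow_rpow_inv_natCast two_ne_zero]
    _ ≤ _ := by
        rw [ENNReal.ofReal_mul (by linarith [m.cast_nonneg (α := ℝ)])]
        gcongr

/-- General Menshov–Rademacher inequality for a finite orthonormal system. -/
theorem menshov_rademacher_inequality
    {X : Type*} [MeasurableSpace X] (μ : Measure X)
    {𝕜 : Type*} [RCLike 𝕜]
    {H : Type*} [NormedAddCommGroup H] [InnerProductSpace 𝕜 H] [CompleteSpace H]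
    (N : ℕ) (hN : 1 ≤ N) (ψ : ℕ → X → H) (b : ℕ → 𝕜)
    (hmem : ∀ n, 1 ≤ n → n ≤ N → MemLp (ψ n) 2 μ)
    (horth : ∀ n m, 1 ≤ n → n ≤ N → 1 ≤ m → m ≤ N →
      ∫ x, (inner 𝕜 (ψ n x) (ψ m x) : 𝕜) ∂μ = if n = m then (1 : 𝕜) else 0) :
    (∫⁻ x, (⨆ j ∈ Finset.Icc 1 N,
        (‖∑ n ∈ Finset.Icc 1 j, b n • ψ n x‖₊ : ℝ≥0∞)) ^ 2 ∂μ) ^ (1 / 2 : ℝ)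
      ≤ ENNReal.ofReal
          ((2 + Real.logb 2 (N : ℝ)) * Real.sqrt (∑ n ∈ Finset.Icc 1 N, ‖b n‖ ^ 2)) :=
  menshov_rademacher_inequality_general μ N ψ b hmem horth
end

section
/- Let (a_n)_{n=1}^∞ be a sequence of scalars with Σ_{n=1}^∞ |a_n|² (log₂(n+1))² < ∞, and let (φ_n)_{n=1}^∞ be an orthonormal system in L₂(X, dμ; H) with fixed strongly measurable representatives. Then for μ-almost every x ∈ X one has Σ_{k=0}^∞ ‖Σ_{n=2^k}^{2^{k+1}−1} a_n φ_n(x)‖_H < ∞; in particular, the dyadic subsequence of partial sums S_{2^k}(x) := Σ_{n=1}^{2^k} a_n φ_n(x) converges in the norm of H for μ-almost every x ∈ X. -/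
/-!
Orthonormality gives the Pythagorean identity `‖∑_{n ∈ s} a_n φ_n‖₂² = ∑_{n ∈ s} |a_n|²`, so the
dyadic block `D_k = ∑_{2^k ≤ n < 2^(k+1)} a_n φ_n` has `L²` norm `√b_k`, where
`b_k = ∑_{2^k ≤ n < 2^(k+1)} |a_n|²`. On that block `log₂(n+1) ≥ k`, hence `∑ k² b_k < ∞`, and
`2√b_k ≤ 1/k² + k² b_k` gives `∑ √b_k < ∞`. A series whose `L²` norms are summable converges
absolutely almost everywhere, so `∑ ‖D_k(x)‖ < ∞` a.e. Finally `S_{2^K} = ∑_{k<K} D_k + a_{2^K} φ_{2^K}`,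
and the last term tends to `0` a.e. by the same argument applied to single terms, as `|a_{2^k}| ≤ √b_k`.
-/

open MeasureTheory Filter Finset Topology
open scoped ComplexConjugate

section Orthonormal

variable {X : Type*} [MeasurableSpace X] {μ : Measure X} {𝕜 : Type*} [RCLike 𝕜]
  {H : Type*} [NormedAddCommGroup H] [InnerProductSpace 𝕜 H] {ι : Type*} [DecidableEq ι]
  {φ : ι → X → H}

local notation "⟪" x ", " y "⟫" => inner 𝕜 x y

theorem integrable_inner_of_memLp_two {f g : X → H} (hf : MemLp f 2 μ) (hg : MemLp g 2 μ) :
    Integrable (fun x => ⟪f x, g x⟫) μ :=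
  (L2.integrable_inner (hf.toLp f) (hg.toLp g)).congr <| by
    filter_upwards [hf.coeFn_toLp, hg.coeFn_toLp] with x hfx hgx
    rw [hfx, hgx]

theorem integral_norm_sq_sum_smul_of_orthonormal {s : Finset ι}
    (hmem : ∀ i ∈ s, MemLp (φ i) 2 μ)
    (horth : ∀ i ∈ s, ∀ j ∈ s, ∫ x, ⟪φ i x, φ j x⟫ ∂μ = if i = j then 1 else 0) (c : ι → 𝕜) :
    ∫ x, ‖∑ i ∈ s, c i • φ i x‖ ^ 2 ∂μ = ∑ i ∈ s, ‖c i‖ ^ 2 := by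
  have hint : ∀ i ∈ s, ∀ j ∈ s, Integrable (fun x => conj (c i) * c j * ⟪φ i x, φ j x⟫) μ :=
    fun i hi j hj => (integrable_inner_of_memLp_two (hmem i hi) (hmem j hj)).const_mul _
  apply RCLike.ofReal_injective (K := 𝕜)
  calc ((∫ x, ‖∑ i ∈ s, c i • φ i x‖ ^ 2 ∂μ : ℝ) : 𝕜)
      = ∫ x, ∑ i ∈ s, ∑ j ∈ s, conj (c i) * c j * ⟪φ i x, φ j x⟫ ∂μ := by
        rw [← integral_ofReal]
        congr 1 with x
        simp only [RCLike.ofReal_pow, ← inner_self_eq_norm_sq_to_K, sum_inner, inner_sum,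
          inner_smul_left, inner_smul_right, mul_sum, mul_assoc]
        rw [sum_comm]
        exact sum_congr rfl fun i _ => sum_congr rfl fun j _ => mul_left_comm _ _ _
    _ = ∑ i ∈ s, ∑ j ∈ s, conj (c i) * c j * ∫ x, ⟪φ i x, φ j x⟫ ∂μ := by
        rw [integral_finsetSum s fun i hi => integrable_finsetSum s (hint i hi)]
        refine sum_congr rfl fun i hi => ?_
        rw [integral_finsetSum s (hint i hi)]
        simp only [integral_const_mul]
    _ = ∑ i ∈ s, conj (c i) * c i := by
        refine sum_congr rfl fun i hi => ?_
        rw [sum_congr rfl fun j hj => by rw [horth i hi j hj]]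
        simp [hi]
    _ = ((∑ i ∈ s, ‖c i‖ ^ 2 : ℝ) : 𝕜) := by
        push_cast
        exact sum_congr rfl fun i _ => RCLike.conj_mul (c i)

theorem eLpNorm_sum_smul_of_orthonormal {s : Finset ι}
    (hmem : ∀ i ∈ s, MemLp (φ i) 2 μ)
    (horth : ∀ i ∈ s, ∀ j ∈ s, ∫ x, ⟪φ i x, φ j x⟫ ∂μ = if i = j then 1 else 0) (c : ι → 𝕜) :
    eLpNorm (fun x => ∑ i ∈ s, c i • φ i x) 2 μ = ENNReal.ofReal √(∑ i ∈ s, ‖c i‖ ^ 2) := by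
  rw [(memLp_finsetSum (f := fun i x => c i • φ i x) s fun i hi => (hmem i hi).const_smul (c i)).eLpNorm_eq_integral_rpow_norm
    two_ne_zero ENNReal.ofNat_ne_top, ← integral_norm_sq_sum_smul_of_orthonormal hmem horth c,
    Real.sqrt_eq_rpow]
  norm_num

theorem ae_summable_norm_sum_smul_of_orthonormal {S : Set ι}
    (hmem : ∀ i ∈ S, MemLp (φ i) 2 μ)
    (horth : ∀ i ∈ S, ∀ j ∈ S, ∫ x, ⟪φ i x, φ j x⟫ ∂μ = if i = j then 1 else 0) (c : ι → 𝕜)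
    {κ : Type*} [Countable κ] {t : κ → Finset ι} (ht : ∀ k, ↑(t k) ⊆ S)
    (hsum : Summable fun k => √(∑ i ∈ t k, ‖c i‖ ^ 2)) :
    ∀ᵐ x ∂μ, Summable fun k => ‖∑ i ∈ t k, c i • φ i x‖ := by
  have hmem' : ∀ k, ∀ i ∈ t k, MemLp (φ i) 2 μ := fun k i hi => hmem i (ht k hi)
  refine summable_norm_of_tsum_eLpNorm_ne_top one_le_two (fun k => (memLp_finsetSum (f := fun i x => c i • φ i x) _
    fun i hi => (hmem' k i hi).const_smul (c i)).aestronglyMeasurable) ?_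
  rw [tsum_congr fun k => eLpNorm_sum_smul_of_orthonormal (hmem' k)
    (fun i hi j hj => horth i (ht k hi) j (ht k hj)) c,
    ← ENNReal.ofReal_tsum_of_nonneg (fun k => Real.sqrt_nonneg _) hsum]
  exact ENNReal.ofReal_ne_top

end Orthonormal

theorem Finset.sum_range_sum_Ico_of_monotone {M : Type*} [AddCommMonoid M] (f : ℕ → M)
    {u : ℕ → ℕ} (hu : Monotone u) (K : ℕ) :
    ∑ k ∈ range K, ∑ n ∈ Ico (u k) (u (k + 1)), f n = ∑ n ∈ Ico (u 0) (u K), f n := by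
  induction K with
  | zero => simp
  | succ K ih =>
    rw [sum_range_succ, ih, sum_Ico_consecutive f (hu K.zero_le) (hu K.le_succ)]

theorem Finset.Icc_two_pow_sub_one_eq_Ico (k : ℕ) :
    Icc (2 ^ k) (2 ^ (k + 1) - 1) = Ico (2 ^ k) (2 ^ (k + 1)) :=
  Icc_sub_one_right_eq_Ico_of_not_isMin (by simp) _

theorem Real.le_logb_two_add_one_of_two_pow_le {k n : ℕ} (h : 2 ^ k ≤ n) :
    (k : ℝ) ≤ Real.logb 2 (n + 1) := by
  rw [Real.le_logb_iff_rpow_le one_lt_two (by positivity), Real.rpow_natCast]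
  have : (2 : ℝ) ^ k ≤ n := by exact_mod_cast h
  linarith

theorem summable_sqrt_of_summable_sq_mul {b : ℕ → ℝ} (hb : ∀ k, 0 ≤ b k)
    (h : Summable fun k : ℕ => (k : ℝ) ^ 2 * b k) : Summable fun k => √(b k) := by
  refine Summable.of_norm_bounded_eventually_nat
    ((Real.summable_one_div_nat_pow.mpr one_lt_two).add h) ?_
  filter_upwards [eventually_gt_atTop 0] with k hk
  have hk' : (k : ℝ) ≠ 0 := by positivity
  have hsq : √(b k) ^ 2 = b k := Real.sq_sqrt (hb k)
  have amgm := two_mul_le_add_sq (1 / (k : ℝ)) (k * √(b k))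
  rw [Real.norm_of_nonneg (Real.sqrt_nonneg _)]
  field_simp at amgm ⊢
  rw [hsq] at amgm
  have : 0 ≤ (k : ℝ) ^ 2 * √(b k) := by positivity
  linarith

theorem summable_sum_Ico_two_pow {w : ℕ → ℝ} (hw : ∀ n, 0 ≤ w n) (h : Summable w) :
    Summable fun k => ∑ n ∈ Ico (2 ^ k) (2 ^ (k + 1)), w n :=
  summable_of_sum_range_le (fun k => sum_nonneg fun n _ => hw n) fun K => by
    rw [sum_range_sum_Ico_of_monotone w (pow_right_mono₀ one_le_two) K]
    exact h.sum_le_tsum _ fun n _ => hw n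

theorem summable_sqrt_sum_Ico_two_pow {c : ℕ → ℝ} (hc : ∀ n, 0 ≤ c n)
    (h : Summable fun n : ℕ => c n * Real.logb 2 (n + 1) ^ 2) :
    Summable fun k => √(∑ n ∈ Ico (2 ^ k) (2 ^ (k + 1)), c n) := by
  refine summable_sqrt_of_summable_sq_mul (fun k => sum_nonneg fun n _ => hc n) ?_
  refine (summable_sum_Ico_two_pow (fun n => mul_nonneg (hc n) (sq_nonneg _)) h).of_nonneg_of_le
    (fun k => mul_nonneg (sq_nonneg _) (sum_nonneg fun n _ => hc n)) fun k => ?_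
  rw [mul_sum]
  refine sum_le_sum fun n hn => ?_
  rw [mul_comm]
  have hk := Real.le_logb_two_add_one_of_two_pow_le (mem_Ico.mp hn).1
  gcongr
  exact hc n

theorem exists_tendsto_sum_Icc_one_two_pow {E : Type*} [NormedAddCommGroup E] [CompleteSpace E]
    {f : ℕ → E} (hblocks : Summable fun k => ‖∑ n ∈ Ico (2 ^ k) (2 ^ (k + 1)), f n‖)
    (hlast : Tendsto (fun k => f (2 ^ k)) atTop (𝓝 0)) :
    ∃ l, Tendsto (fun K => ∑ n ∈ Icc 1 (2 ^ K), f n) atTop (𝓝 l) := by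
  have hlim := hblocks.of_norm.hasSum.tendsto_sum_nat.add hlast
  rw [add_zero] at hlim
  refine ⟨_, hlim.congr fun K => ?_⟩
  rw [sum_range_sum_Ico_of_monotone f (pow_right_mono₀ one_le_two), ← Ico_add_one_right_eq_Icc,
    sum_Ico_succ_top Nat.one_le_two_pow, pow_zero]

/-- A.e. absolute summability of the dyadic blocks, and a.e. convergence of the dyadic
subsequence of partial sums. -/
theorem dyadic_blocks_ae_summable_and_dyadic_convergence
    {X : Type*} [MeasurableSpace X] (μ : Measure X)
    {𝕜 : Type*} [RCLike 𝕜]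
    {H : Type*} [NormedAddCommGroup H] [InnerProductSpace 𝕜 H] [CompleteSpace H]
    (a : ℕ → 𝕜) (φ : ℕ → X → H)
    (hmem : ∀ n, 1 ≤ n → MemLp (φ n) 2 μ)
    (horth : ∀ n m, 1 ≤ n → 1 ≤ m →
      ∫ x, (inner 𝕜 (φ n x) (φ m x) : 𝕜) ∂μ = if n = m then (1 : 𝕜) else 0)
    (hL : Summable fun n : ℕ => ‖a (n + 1)‖ ^ 2 * (Real.logb 2 ((n : ℝ) + 2)) ^ 2) :
    ∀ᵐ x ∂μ,
      (Summable fun k : ℕ =>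
        ‖∑ n ∈ Finset.Icc (2 ^ k) (2 ^ (k + 1) - 1), a n • φ n x‖) ∧
      ∃ l : H, Tendsto (fun k : ℕ => ∑ n ∈ Finset.Icc 1 (2 ^ k), a n • φ n x)
        atTop (nhds l) := by
  have horth' : ∀ n ∈ Set.Ici 1, ∀ m ∈ Set.Ici 1, _ := fun n hn m hm => horth n m hn hm
  have hw : Summable fun n : ℕ => ‖a n‖ ^ 2 * Real.logb 2 ((n : ℝ) + 1) ^ 2 := by
    refine (summable_nat_add_iff 1).mp (hL.congr fun n => ?_)
    push_cast
    ring_nf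
  have hblocks := summable_sqrt_sum_Ico_two_pow (fun n => sq_nonneg ‖a n‖) hw
  have hsingle : Summable fun k => √(∑ n ∈ {2 ^ k}, ‖a n‖ ^ 2) :=
    hblocks.of_nonneg_of_le (fun _ => Real.sqrt_nonneg _) fun k => Real.sqrt_le_sqrt <|
      sum_le_sum_of_subset_of_nonneg (by simp [pow_succ]) fun _ _ _ => sq_nonneg _
  filter_upwards [ae_summable_norm_sum_smul_of_orthonormal (S := Set.Ici 1) hmem horth' a
      (fun k n hn => le_trans Nat.one_le_two_pow (mem_Ico.mp hn).1) hblocks,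
    ae_summable_norm_sum_smul_of_orthonormal (S := Set.Ici 1) hmem horth' a
      (fun k => by simpa using Nat.one_le_two_pow) hsingle] with x hD hP
  simp_rw [Icc_two_pow_sub_one_eq_Ico]
  refine ⟨hD, exists_tendsto_sum_Icc_one_two_pow hD ?_⟩
  simpa [tendsto_zero_iff_norm_tendsto_zero] using hP.tendsto_atTop_zero
end
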